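/- arXiv:1404.0790 — 5 statements merged into one kernel-verified Lean document; each statement's English description precedes it below -/
import Mathlib

section
/- For every dimension d ≥ 1, every nonempty set E ⊆ ℝ^d, and all real numbers r, s with 0 < r ≤ s, the Lebesgue measures of the open neighborhoods satisfy vol(E_s) ≤ (s/r)^d · vol(E_r) (an inequality in [0,∞]). -/
/-!
Let `π` send each point to a nearest point of `closure E` and put `f z = λ z + (1 - λ) π z` with
`λ = r / s`. Nearest-point maps are monotone, `⟪z - w, π z - π w⟫ ≥ 0`, so `f` expands distances
by at least `λ`, and `f` maps `E_s` into `E_r`. A map expanding distances by `λ` shrinks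
`d`-dimensional Hausdorff measure, a multiple of Lebesgue measure, by at most `λ ^ d`.
-/

open MeasureTheory Metric Filter Set
open scoped ENNReal Topology

open Module

theorem AntilipschitzWith.addHaar_le_mul_addHaar_image {E : Type*} [NormedAddCommGroup E]
    [NormedSpace ℝ E] [FiniteDimensional ℝ E] [MeasurableSpace E] [BorelSpace E]
    (μ : Measure E) [μ.IsAddHaarMeasure] {K : NNReal} {f : E → E} (hf : AntilipschitzWith K f)
    (s : Set E) : μ s ≤ (K : ℝ≥0∞) ^ finrank ℝ E * μ (f '' s) := by
  have hμ : μ = Measure.addHaarScalarFactor μ μH[finrank ℝ E] • μH[finrank ℝ E] :=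
    Measure.isAddLeftInvariant_eq_smul _ _
  rw [hμ]
  simp only [Measure.smul_apply, ENNReal.smul_def, smul_eq_mul]
  rw [mul_left_comm]
  gcongr
  simpa only [ENNReal.rpow_natCast] using hf.le_hausdorffMeasure_image (Nat.cast_nonneg _) s

section InnerProductSpace

variable {V : Type*} [NormedAddCommGroup V] [InnerProductSpace ℝ V]

/-- Monotonicity of nearest-point selections: `a` is nearer to `z` and `b` nearer to `w`. -/
theorem inner_sub_sub_nonneg_of_dist_le {z w a b : V} (ha : dist z a ≤ dist z b)
    (hb : dist w b ≤ dist w a) : 0 ≤ inner ℝ (z - w) (a - b) := by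
  have ha' : ‖z - a‖ ^ 2 ≤ ‖z - b‖ ^ 2 := by
    rw [← dist_eq_norm, ← dist_eq_norm]; gcongr
  have hb' : ‖w - b‖ ^ 2 ≤ ‖w - a‖ ^ 2 := by
    rw [← dist_eq_norm, ← dist_eq_norm]; gcongr
  simp only [norm_sub_sq_real] at ha' hb'
  simp only [inner_sub_left, inner_sub_right]
  linarith

theorem mul_norm_le_norm_smul_add_smul {u v : V} (huv : 0 ≤ inner ℝ u v) {l : ℝ} (hl0 : 0 ≤ l)
    (hl1 : l ≤ 1) : l * ‖u‖ ≤ ‖l • u + (1 - l) • v‖ := by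
  have hsq : (l * ‖u‖) ^ 2 ≤ ‖l • u + (1 - l) • v‖ ^ 2 := by
    rw [norm_add_sq_real, real_inner_smul_left, real_inner_smul_right, norm_smul,
      Real.norm_of_nonneg hl0]
    nlinarith [mul_nonneg (mul_nonneg hl0 (sub_nonneg.2 hl1)) huv, sq_nonneg ‖(1 - l) • v‖]
  exact le_of_sq_le_sq hsq (norm_nonneg _)

variable {F : Set V} {π : V → V} {l : ℝ}

theorem antilipschitzWith_homothety_nearest (hπF : ∀ z, π z ∈ F)
    (hπ : ∀ z, infDist z F = dist z (π z)) (hl0 : 0 < l) (hl1 : l ≤ 1) :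
    AntilipschitzWith l⁻¹.toNNReal fun z => l • z + (1 - l) • π z := by
  have hnear : ∀ x, ∀ y ∈ F, dist x (π x) ≤ dist x y := fun x y hy =>
    (hπ x).symm.trans_le (infDist_le_dist_of_mem hy)
  refine AntilipschitzWith.of_le_mul_dist fun z w => ?_
  have hmono := inner_sub_sub_nonneg_of_dist_le (hnear z _ (hπF w)) (hnear w _ (hπF z))
  rw [Real.coe_toNNReal _ (inv_nonneg.2 hl0.le), ← div_eq_inv_mul, le_div_iff₀' hl0]
  calc l * dist z w ≤ ‖l • (z - w) + (1 - l) • (π z - π w)‖ := by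
        rw [dist_eq_norm]; exact mul_norm_le_norm_smul_add_smul hmono hl0.le hl1
    _ = dist (l • z + (1 - l) • π z) (l • w + (1 - l) • π w) := by
        rw [dist_eq_norm]; congr 1; module

theorem mapsTo_homothety_nearest_thickening (hπF : ∀ z, π z ∈ F)
    (hπ : ∀ z, infDist z F = dist z (π z)) (hl0 : 0 < l) (δ : ℝ) :
    MapsTo (fun z => l • z + (1 - l) • π z) (thickening δ F) (thickening (l * δ) F) := by
  have hF : F.Nonempty := ⟨π 0, hπF 0⟩
  intro z hz
  rw [mem_thickening_iff_infDist_lt hF] at hz ⊢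
  calc infDist (l • z + (1 - l) • π z) F ≤ dist (l • z + (1 - l) • π z) (π z) :=
        infDist_le_dist_of_mem (hπF z)
    _ = l * infDist z F := by
        rw [hπ, dist_eq_norm, dist_eq_norm,
          show l • z + (1 - l) • π z - π z = l • (z - π z) by module, norm_smul,
          Real.norm_of_nonneg hl0.le]
    _ < l * δ := by gcongr

end InnerProductSpace

theorem addHaar_thickening_le {E : Type*} [NormedAddCommGroup E] [InnerProductSpace ℝ E]
    [FiniteDimensional ℝ E] [MeasurableSpace E] [BorelSpace E] (μ : Measure E)
    [μ.IsAddHaarMeasure] {X : Set E} (hX : X.Nonempty) {r s : ℝ} (hr : 0 < r) (hrs : r ≤ s) :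
    μ (thickening s X) ≤ ENNReal.ofReal ((s / r) ^ finrank ℝ E) * μ (thickening r X) := by
  have hs : 0 < s := hr.trans_le hrs
  have hl0 : 0 < r / s := div_pos hr hs
  have hl1 : r / s ≤ 1 := (div_le_one hs).2 hrs
  choose π hπF hπ using isClosed_closure.exists_infDist_eq_dist hX.closure
  have hf := antilipschitzWith_homothety_nearest hπF hπ hl0 hl1
  have hmaps := mapsTo_homothety_nearest_thickening hπF hπ hl0 s
  rw [div_mul_cancel₀ r hs.ne', thickening_closure, thickening_closure] at hmaps
  rw [inv_div] at hf
  calc μ (thickening s X)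
      ≤ ((s / r).toNNReal : ℝ≥0∞) ^ finrank ℝ E *
          μ ((fun z => (r / s) • z + (1 - r / s) • π z) '' thickening s X) :=
        hf.addHaar_le_mul_addHaar_image μ _
    _ ≤ ENNReal.ofReal ((s / r) ^ finrank ℝ E) * μ (thickening r X) := by
        rw [ENNReal.ofReal_pow (div_pos hs hr).le]
        exact mul_le_mul_right (measure_mono hmaps.image_subset) _

theorem volume_thickening_le_general (d : ℕ) (E : Set (EuclideanSpace ℝ (Fin d)))
    (hE : E.Nonempty) (r s : ℝ) (hr : 0 < r) (hrs : r ≤ s) :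
    volume (Metric.thickening s E) ≤
      ENNReal.ofReal ((s / r) ^ d) * volume (Metric.thickening r E) := by
  simpa only [finrank_euclideanSpace_fin] using addHaar_thickening_le volume hE hr hrs

/-- For every dimension `d ≥ 1`, every nonempty `E ⊆ ℝ^d` and all reals `0 < r ≤ s`, the
Lebesgue measures of the open neighborhoods satisfy `vol(E_s) ≤ (s/r)^d · vol(E_r)`. -/
theorem volume_thickening_le (d : ℕ) (hd : 1 ≤ d) (E : Set (EuclideanSpace ℝ (Fin d)))
    (hE : E.Nonempty) (r s : ℝ) (hr : 0 < r) (hrs : r ≤ s) :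
    volume (Metric.thickening s E) ≤
      ENNReal.ofReal ((s / r) ^ d) * volume (Metric.thickening r E) :=
  volume_thickening_le_general d E hE r s hr hrs
end

section
/- For every nonempty set E ⊆ ℝ^d and every r > 0 such that vol(E_r) < ∞, one has limsup_{h→0+} (vol(E_{r+h}) − vol(E_r))/h ≤ (d/r) · vol(E_r). -/
/-!
Kneser's inequality `vol(E_{λr}) ≤ λ^d vol(E_r)` for `λ ≥ 1` gives
`vol(E_{r+h}) - vol(E_r) ≤ (((r + h)/r)^d - 1) vol(E_r)`, and the factor in front of `vol(E_r)`,
divided by `h`, tends to `d/r`. Kneser's inequality itself holds because the map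
`z ↦ z/λ + (1 - 1/λ) y(z)`, with `y(z)` a nearest point of `closure E`, sends `E_{λr}` into `E_r`
and, nearest-point maps being monotone, shrinks distances by at most the factor `1/λ`; so it cannot
shrink Hausdorff measure, hence Haar measure, by more than `λ^d`.
-/

open MeasureTheory Metric Filter Set Module
open scoped ENNReal NNReal Topology RealInnerProductSpace

section InnerProductSpace

variable {E : Type*} [NormedAddCommGroup E] [InnerProductSpace ℝ E]

theorem norm_le_norm_add_of_inner_nonneg {x y : E} (h : 0 ≤ ⟪x, y⟫) : ‖x‖ ≤ ‖x + y‖ := by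
  refine (pow_le_pow_iff_left₀ (norm_nonneg _) (norm_nonneg _) two_ne_zero).1 ?_
  rw [norm_add_sq_real]
  nlinarith [sq_nonneg ‖y‖]

/-- Nearest-point maps onto a set are monotone. -/
theorem real_inner_sub_sub_nonneg_of_infDist_eq_dist {s : Set E} {z₁ z₂ y₁ y₂ : E}
    (hy₁ : y₁ ∈ s) (hy₂ : y₂ ∈ s) (h₁ : infDist z₁ s = dist z₁ y₁)
    (h₂ : infDist z₂ s = dist z₂ y₂) : 0 ≤ ⟪z₁ - z₂, y₁ - y₂⟫ := by
  have near₁ : ‖z₁ - y₁‖ ^ 2 ≤ ‖z₁ - y₂‖ ^ 2 := by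
    rw [← dist_eq_norm, ← dist_eq_norm, ← h₁]
    gcongr
    exacts [infDist_nonneg, infDist_le_dist_of_mem hy₂]
  have near₂ : ‖z₂ - y₂‖ ^ 2 ≤ ‖z₂ - y₁‖ ^ 2 := by
    rw [← dist_eq_norm, ← dist_eq_norm, ← h₂]
    gcongr
    exacts [infDist_nonneg, infDist_le_dist_of_mem hy₁]
  rw [norm_sub_sq_real, norm_sub_sq_real] at near₁ near₂
  rw [inner_sub_left, inner_sub_right, inner_sub_right]
  linarith

theorem exists_antilipschitzWith_mapsTo_thickening [ProperSpace E] {s : Set E}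
    (hs : IsClosed s) (hne : s.Nonempty) {l : ℝ} (hl : 1 ≤ l) (r : ℝ) :
    ∃ Φ : E → E, AntilipschitzWith l.toNNReal Φ ∧
      MapsTo Φ (thickening (l * r) s) (thickening r s) := by
  have hl₀ : 0 < l := one_pos.trans_le hl
  have hl_inv : 0 ≤ 1 - l⁻¹ := sub_nonneg.2 (inv_le_one_of_one_le₀ hl)
  choose y hy hyd using hs.exists_infDist_eq_dist hne
  refine ⟨fun z ↦ l⁻¹ • z + (1 - l⁻¹) • y z, AntilipschitzWith.of_le_mul_dist fun z₁ z₂ ↦ ?_, ?_⟩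
  · have hmono := real_inner_sub_sub_nonneg_of_infDist_eq_dist (hy z₁) (hy z₂) (hyd z₁) (hyd z₂)
    rw [Real.coe_toNNReal _ hl₀.le]
    calc dist z₁ z₂ = l * ‖l⁻¹ • (z₁ - z₂)‖ := by
          rw [norm_smul, Real.norm_of_nonneg (inv_nonneg.2 hl₀.le), dist_eq_norm]
          field_simp
      _ ≤ l * ‖l⁻¹ • (z₁ - z₂) + (1 - l⁻¹) • (y z₁ - y z₂)‖ := by
          gcongr
          refine norm_le_norm_add_of_inner_nonneg ?_
          rw [real_inner_smul_left, real_inner_smul_right]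
          positivity
      _ = _ := by rw [dist_eq_norm]; congr 2; module
  · intro z hz
    rw [mem_thickening_iff_infDist_lt hne] at hz ⊢
    calc infDist (l⁻¹ • z + (1 - l⁻¹) • y z) s ≤ dist (l⁻¹ • z + (1 - l⁻¹) • y z) (y z) :=
          infDist_le_dist_of_mem (hy z)
      _ = ‖l⁻¹ • (z - y z)‖ := by rw [dist_eq_norm]; congr 1; module
      _ = l⁻¹ * infDist z s := by
          rw [norm_smul, Real.norm_of_nonneg (inv_nonneg.2 hl₀.le), hyd, dist_eq_norm]
      _ < l⁻¹ * (l * r) := by gcongr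
      _ = r := by field_simp

end InnerProductSpace

section AddHaar

variable {E : Type*} [NormedAddCommGroup E] [NormedSpace ℝ E] [FiniteDimensional ℝ E]
  [MeasurableSpace E] [BorelSpace E] (μ : Measure E) [μ.IsAddHaarMeasure]

/-- Haar measures are multiples of the top-dimensional Hausdorff measure. -/
theorem AntilipschitzWith.addHaar_preimage_le {K : ℝ≥0} {f : E → E} (hf : AntilipschitzWith K f)
    (s : Set E) : μ (f ⁻¹' s) ≤ (K : ℝ≥0∞) ^ finrank ℝ E * μ s := by
  have hμ : μ = μ.addHaarScalarFactor μH[finrank ℝ E] • μH[finrank ℝ E] :=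
    Measure.isAddLeftInvariant_eq_smul _ _
  have hH := hf.hausdorffMeasure_preimage_le (Nat.cast_nonneg (finrank ℝ E)) s
  rw [ENNReal.rpow_natCast] at hH
  rw [hμ]
  simp only [Measure.smul_apply, ENNReal.smul_def, smul_eq_mul]
  rw [mul_left_comm]
  gcongr

end AddHaar

section Kneser

variable {E : Type*} [NormedAddCommGroup E] [InnerProductSpace ℝ E] [FiniteDimensional ℝ E]
  [MeasurableSpace E] [BorelSpace E] (μ : Measure E) [μ.IsAddHaarMeasure]

theorem addHaar_thickening_mul_le (s : Set E) {l : ℝ} (hl : 1 ≤ l) (r : ℝ) :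
    μ (thickening (l * r) s) ≤ ENNReal.ofReal (l ^ finrank ℝ E) * μ (thickening r s) := by
  rcases s.eq_empty_or_nonempty with rfl | hne
  · simp
  rw [← thickening_closure, ← thickening_closure (δ := r)]
  obtain ⟨Φ, hΦ, hmaps⟩ :=
    exists_antilipschitzWith_mapsTo_thickening isClosed_closure hne.closure hl r
  calc μ (thickening (l * r) (closure s)) ≤ μ (Φ ⁻¹' thickening r (closure s)) := measure_mono hmaps
    _ ≤ (l.toNNReal : ℝ≥0∞) ^ finrank ℝ E * μ (thickening r (closure s)) :=
        hΦ.addHaar_preimage_le μ _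
    _ = _ := by rw [← ENNReal.coe_pow, ← Real.toNNReal_pow (one_pos.trans_le hl).le]; rfl

theorem addHaar_thickening_add_sub_le (s : Set E) {r h : ℝ} (hr : 0 < r) (hh : 0 ≤ h) :
    μ (thickening (r + h) s) - μ (thickening r s) ≤
      ENNReal.ofReal (((r + h) / r) ^ finrank ℝ E - 1) * μ (thickening r s) := by
  have hl : 1 ≤ (r + h) / r := by rw [le_div_iff₀ hr]; linarith
  have hkneser := addHaar_thickening_mul_le μ s hl r
  rw [div_mul_cancel₀ _ hr.ne'] at hkneser
  rw [tsub_le_iff_right]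
  calc _ ≤ ENNReal.ofReal (((r + h) / r) ^ finrank ℝ E) * μ (thickening r s) := hkneser
    _ = ENNReal.ofReal (((r + h) / r) ^ finrank ℝ E - 1 + 1) * μ (thickening r s) := by
        rw [sub_add_cancel]
    _ = _ := by
        rw [ENNReal.ofReal_add (sub_nonneg.2 (one_le_pow₀ hl)) zero_le_one, ENNReal.ofReal_one,
          add_mul, one_mul]

end Kneser

theorem tendsto_div_add_pow_sub_one_div {r : ℝ} (hr : r ≠ 0) (n : ℕ) :
    Tendsto (fun h ↦ (((r + h) / r) ^ n - 1) / h) (𝓝[≠] 0) (𝓝 (n / r)) := by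
  have hderiv : HasDerivAt (fun h ↦ ((r + h) / r) ^ n) (n / r) 0 := by
    simpa [hr, div_eq_mul_inv] using ((((hasDerivAt_id (0 : ℝ)).const_add r).div_const r).fun_pow n)
  refine (hasDerivAt_iff_tendsto_slope.1 hderiv).congr fun h ↦ ?_
  simp [slope_def_field, hr]

theorem limsup_volume_thickening_ratio_le_general (d : ℕ) (E : Set (EuclideanSpace ℝ (Fin d)))
    (r : ℝ) (hr : 0 < r)
    (hfin : volume (Metric.thickening r E) < ⊤) :
    Filter.limsup
      (fun h : ℝ =>
        (volume (Metric.thickening (r + h) E) - volume (Metric.thickening r E)) /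
          ENNReal.ofReal h)
      (𝓝[>] (0 : ℝ))
      ≤ ENNReal.ofReal (d / r) * volume (Metric.thickening r E) := by
  set V := volume (Metric.thickening r E)
  have hbound : ∀ᶠ h in 𝓝[>] (0 : ℝ),
      (volume (Metric.thickening (r + h) E) - V) / ENNReal.ofReal h ≤
        ENNReal.ofReal ((((r + h) / r) ^ d - 1) / h) * V := by
    filter_upwards [self_mem_nhdsWithin] with h (hh : 0 < h)
    have := addHaar_thickening_add_sub_le volume E hr hh.le
    rw [finrank_euclideanSpace_fin] at this
    rw [ENNReal.ofReal_div_of_pos hh, ← ENNReal.mul_div_right_comm]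
    gcongr
  have hlim : Tendsto (fun h ↦ ENNReal.ofReal ((((r + h) / r) ^ d - 1) / h) * V) (𝓝[>] 0)
      (𝓝 (ENNReal.ofReal (d / r) * V)) :=
    ENNReal.Tendsto.mul_const (ENNReal.tendsto_ofReal
      ((tendsto_div_add_pow_sub_one_div hr.ne' d).mono_left
        (nhdsGT_le_nhdsNE 0))) (Or.inr hfin.ne)
  exact (limsup_le_limsup hbound).trans hlim.limsup_eq.le

/-- For every nonempty `E ⊆ ℝ^d` and every `r > 0` with `vol(E_r) < ∞`, one has
`limsup_{h→0+} (vol(E_{r+h}) − vol(E_r))/h ≤ (d/r) · vol(E_r)`. -/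
theorem limsup_volume_thickening_ratio_le (d : ℕ) (E : Set (EuclideanSpace ℝ (Fin d)))
    (hE : E.Nonempty) (r : ℝ) (hr : 0 < r)
    (hfin : volume (Metric.thickening r E) < ⊤) :
    Filter.limsup
      (fun h : ℝ =>
        (volume (Metric.thickening (r + h) E) - volume (Metric.thickening r E)) /
          ENNReal.ofReal h)
      (𝓝[>] (0 : ℝ))
      ≤ ENNReal.ofReal (d / r) * volume (Metric.thickening r E) :=
  limsup_volume_thickening_ratio_le_general d E r hr hfin
end

section
/- Let r > 0 and let E ⊆ ℝ^d be a nonempty closed set. Then the following are equivalent: (a) there exists a nonempty closed set S ⊆ ℝ^d such that E = S + closedBall(0, r) (Minkowski sum); (b) E has the uniform interior ball property of radius r, i.e. for every x ∈ E there exists y ∈ ℝ^d with dist(x, y) ≤ r and closedBall(y, r) ⊆ E. -/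
open Metric Set
open scoped Pointwise

/-- A nonempty closed set `E ⊆ ℝ^d` is an `r`-enlarged set (a Minkowski sum
`S + closedBall 0 r` for some nonempty closed `S`) if and only if it has the uniform
interior ball property of radius `r`. -/
theorem enlarged_iff_uniform_interior_ball (d : ℕ) (r : ℝ) (hr : 0 < r)
    (E : Set (EuclideanSpace ℝ (Fin d))) (hEne : E.Nonempty) (hEcl : IsClosed E) :
    (∃ S : Set (EuclideanSpace ℝ (Fin d)), S.Nonempty ∧ IsClosed S ∧
        E = S + Metric.closedBall 0 r) ↔
      ∀ x ∈ E, ∃ y : EuclideanSpace ℝ (Fin d), dist x y ≤ r ∧ Metric.closedBall y r ⊆ E := by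
  constructor
  · rintro ⟨S, hSne, hScl, rfl⟩ x hx
    obtain ⟨s, hs, b, hb, rfl⟩ := hx
    refine ⟨s, ?_, ?_⟩
    · simpa [dist_eq_norm] using mem_closedBall_zero_iff.mp hb
    · intro z hz
      refine ⟨s, hs, z - s, ?_, by module⟩
      rw [mem_closedBall_zero_iff, ← dist_eq_norm]
      exact mem_closedBall.mp hz
  · intro h
    refine ⟨{y | closedBall y r ⊆ E}, ?_, ?_, ?_⟩
    · obtain ⟨x, hx⟩ := hEne
      obtain ⟨y, _, hy⟩ := h x hx
      exact ⟨y, hy⟩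
    · have heq : {y : EuclideanSpace ℝ (Fin d) | closedBall y r ⊆ E} =
          ⋂ v ∈ closedBall (0 : EuclideanSpace ℝ (Fin d)) r, (fun y => y + v) ⁻¹' E := by
        ext y
        simp only [mem_setOf_eq, mem_iInter, mem_preimage]
        constructor
        · intro hy v hv
          apply hy
          simpa [mem_closedBall, dist_eq_norm] using mem_closedBall_zero_iff.mp hv
        · intro hy z hz
          have := hy (z - y) (by rw [mem_closedBall_zero_iff, ← dist_eq_norm]; exact mem_closedBall.mp hz)
          simpa using this
      rw [heq]
      exact isClosed_biInter fun v _ => hEcl.preimage (by continuity)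
    · ext x
      constructor
      · intro hx
        obtain ⟨y, hd, hy⟩ := h x hx
        refine ⟨y, hy, x - y, ?_, by module⟩
        rw [mem_closedBall_zero_iff, ← dist_eq_norm', dist_comm]
        exact hd
      · rintro ⟨y, hy, b, hb, rfl⟩
        exact hy (by simpa [mem_closedBall, dist_eq_norm] using mem_closedBall_zero_iff.mp hb)
end

section
/- For every dimension d ≥ 1 and every r > 0 there exists a constant M > 0 (depending only on d and r) such that for every nonempty compact connected set Σ ⊆ ℝ^d, the Lebesgue measure of the closed r-neighborhood C_{Σ,r} = { x : dist(x, Σ) ≤ r } satisfies vol(C_{Σ,r}) ≤ M·(1 + ℋ¹(Σ)), where ℋ¹ denotes the 1-dimensional Hausdorff measure (the inequality being read in [0,∞]). -/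
/-!
Take a maximal `r`-separated subset `C` of `Σ`; it is finite because `Σ` is compact, and it is an
`r`-net, so the `r`-neighbourhood of `Σ` is covered by the balls of radius `2r` around `C`. The
balls of radius `r/2` around the points of `C` are disjoint, and as soon as `C` has two points,
connectedness forces `Σ` to cross each of them radially, leaving length at least `r/2` inside each
ball. Hence `#C ≤ 1 + (2/r) ℋ¹(Σ)`, and the volume is at most `#C` times that of a ball of radius
`2r`.
-/

open MeasureTheory Metric Set
open scoped ENNReal NNReal

lemma Metric.mem_cthickening_iff_infDist_le {X : Type*} [PseudoMetricSpace X] {s : Set X}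
    {x : X} {δ : ℝ} (hs : s.Nonempty) (hδ : 0 ≤ δ) :
    x ∈ cthickening δ s ↔ infDist x s ≤ δ := by
  rw [mem_cthickening_iff, ENNReal.le_ofReal_iff_toReal_le (infEDist_ne_top hs) hδ, infDist]

lemma IsCompact.packingNumber_ne_top {X : Type*} [PseudoEMetricSpace X] {S : Set X}
    (hS : IsCompact S) {ε : ℝ≥0} (hε : ε ≠ 0) : packingNumber ε S ≠ ⊤ := by
  obtain ⟨N, -, hN, hcover⟩ := exists_finite_isCover_of_isCompact (ε := ε / 2) (by simpa) hS
  refine ne_top_of_le_ne_top (Set.encard_ne_top_iff.mpr hN) ?_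
  calc packingNumber ε S = packingNumber (2 * (ε / 2)) S := by rw [mul_div_cancel₀ _ two_ne_zero]
    _ ≤ externalCoveringNumber (ε / 2) S := packingNumber_two_mul_le_externalCoveringNumber _ _
    _ ≤ N.encard := hcover.externalCoveringNumber_le_encard

lemma IsPreconnected.ofReal_le_hausdorffMeasure_inter_closedBall {X : Type*} [MetricSpace X]
    [MeasurableSpace X] [BorelSpace X] {S : Set X} (hS : IsPreconnected S) {x y : X}
    (hx : x ∈ S) (hy : y ∈ S) {s : ℝ} (hs : s ≤ dist y x) :
    ENNReal.ofReal s ≤ μH[1] (S ∩ closedBall x s) := by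
  have hlip : LipschitzWith 1 (dist · x) := LipschitzWith.dist_left x
  have hIcc : Icc 0 (dist y x) ⊆ (dist · x) '' S :=
    (hS.image _ hlip.continuous.continuousOn).Icc_subset ⟨x, hx, dist_self x⟩ ⟨y, hy, rfl⟩
  have hsub : Icc 0 s ⊆ (dist · x) '' (S ∩ closedBall x s) := by
    rintro t ⟨ht0, hts⟩
    obtain ⟨z, hz, rfl⟩ := hIcc ⟨ht0, hts.trans hs⟩
    exact ⟨z, ⟨hz, hts⟩, rfl⟩
  calc ENNReal.ofReal s = μH[1] (Icc 0 s) := by simp [hausdorffMeasure_real]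
    _ ≤ μH[1] ((dist · x) '' (S ∩ closedBall x s)) := measure_mono hsub
    _ ≤ μH[1] (S ∩ closedBall x s) := by
        simpa using hlip.hausdorffMeasure_image_le zero_le_one (S ∩ closedBall x s)

lemma IsPreconnected.ncard_mul_le_hausdorffMeasure {X : Type*} [MetricSpace X]
    [MeasurableSpace X] [BorelSpace X] {S C : Set X} (hS : IsPreconnected S) (hCS : C ⊆ S)
    (hC : C.Finite) (hCnt : C.Nontrivial) {ε : ℝ≥0} (hsep : IsSeparated ε C) :
    C.ncard * ENNReal.ofReal (ε / 2) ≤ μH[1] S := by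
  have hdist : ∀ a ∈ C, ∀ b ∈ C, a ≠ b → (ε : ℝ) < dist a b := fun a ha b hb hab => by
    simpa [edist_dist] using hsep ha hb hab
  have hmass : ∀ a ∈ hC.toFinset, ENNReal.ofReal (ε / 2) ≤ μH[1] (S ∩ closedBall a (ε / 2)) := by
    intro a ha
    rw [hC.mem_toFinset] at ha
    obtain ⟨b, hb, hba⟩ := hCnt.exists_ne a
    exact hS.ofReal_le_hausdorffMeasure_inter_closedBall (hCS ha) (hCS hb)
      (by linarith [hdist b hb a ha hba, ε.coe_nonneg])
  have hdisj : (hC.toFinset : Set X).PairwiseDisjoint fun a => closedBall a (ε / 2) :=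
    fun a ha b hb hab => closedBall_disjoint_closedBall <| by
      simpa using hdist a (hC.mem_toFinset.mp ha) b (hC.mem_toFinset.mp hb) hab
  -- restricting to `S` makes the balls, rather than `S`, carry the measurability
  calc C.ncard * ENNReal.ofReal (ε / 2) = ∑ _a ∈ hC.toFinset, ENNReal.ofReal (ε / 2) := by
        rw [Finset.sum_const, nsmul_eq_mul, ncard_eq_toFinset_card C hC]
    _ ≤ ∑ a ∈ hC.toFinset, μH[1] (S ∩ closedBall a (ε / 2)) := Finset.sum_le_sum hmass
    _ = (μH[1]).restrict S (⋃ a ∈ hC.toFinset, closedBall a (ε / 2)) := by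
        rw [measure_biUnion_finset hdisj fun a _ => measurableSet_closedBall]
        simp only [Measure.restrict_apply measurableSet_closedBall, inter_comm]
    _ ≤ μH[1] S := by
        simpa using measure_mono (μ := (μH[1]).restrict S) (subset_univ _)

lemma IsPreconnected.ncard_le_one_add_hausdorffMeasure {X : Type*} [MetricSpace X]
    [MeasurableSpace X] [BorelSpace X] {S C : Set X} (hS : IsPreconnected S) (hCS : C ⊆ S)
    (hC : C.Finite) {ε : ℝ≥0} (hε : ε ≠ 0) (hsep : IsSeparated ε C) :
    (C.ncard : ℝ≥0∞) ≤ 1 + ENNReal.ofReal (2 / ε) * μH[1] S := by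
  rcases C.subsingleton_or_nontrivial with hCs | hCnt
  · exact le_add_right (mod_cast (ncard_le_one hC).mpr fun a ha b hb => hCs ha hb)
  calc (C.ncard : ℝ≥0∞)
      = C.ncard * ENNReal.ofReal (ε / 2) * ENNReal.ofReal (2 / ε) := by
        rw [mul_assoc, ← ENNReal.ofReal_mul (by positivity),
          show (ε : ℝ) / 2 * (2 / ε) = 1 by field_simp, ENNReal.ofReal_one, mul_one]
    _ ≤ μH[1] S * ENNReal.ofReal (2 / ε) := by
        gcongr; exact hS.ncard_mul_le_hausdorffMeasure hCS hC hCnt hsep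
    _ ≤ 1 + ENNReal.ofReal (2 / ε) * μH[1] S := by rw [mul_comm]; exact le_add_self

lemma Set.Finite.addHaar_cthickening_le {E : Type*} [NormedAddCommGroup E] [MeasurableSpace E]
    [BorelSpace E] (μ : Measure E) [μ.IsAddHaarMeasure] {C : Set E} (hC : C.Finite) {δ : ℝ}
    (hδ : 0 ≤ δ) : μ (cthickening δ C) ≤ C.ncard * μ (closedBall 0 δ) := by
  calc μ (cthickening δ C) = μ (⋃ x ∈ hC.toFinset, closedBall x δ) := by
        rw [hC.isCompact.cthickening_eq_biUnion_closedBall hδ]; simp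
    _ ≤ ∑ x ∈ hC.toFinset, μ (closedBall x δ) := measure_biUnion_finset_le _ _
    _ = C.ncard * μ (closedBall 0 δ) := by
        simp [Measure.addHaar_closedBall_center, ncard_eq_toFinset_card C hC]

lemma IsCompact.addHaar_cthickening_le {E : Type*} [NormedAddCommGroup E] [MeasurableSpace E]
    [BorelSpace E] (μ : Measure E) [μ.IsAddHaarMeasure] {S : Set E} (hS : IsCompact S)
    (hSconn : IsPreconnected S) {r : ℝ} (hr : 0 < r) :
    μ (cthickening r S) ≤ μ (closedBall 0 (2 * r)) * (1 + ENNReal.ofReal (2 / r) * μH[1] S) := by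
  set ε := r.toNNReal
  have hε : ε ≠ 0 := by simpa [ε] using hr
  have hεr : (ε : ℝ) = r := Real.coe_toNNReal r hr.le
  have hpack := hS.packingNumber_ne_top hε
  set C := maximalSeparatedSet ε S
  have hC : C.Finite := encard_ne_top_iff.mp (encard_maximalSeparatedSet hpack ▸ hpack)
  have hSC : S ⊆ cthickening r C := by
    rw [hC.isCompact.cthickening_eq_biUnion_closedBall hr.le, ← hεr]
    exact (isCover_maximalSeparatedSet hpack).subset_iUnion_closedBall
  calc μ (cthickening r S) ≤ μ (cthickening (r + r) C) := measure_mono <|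
        (cthickening_subset_of_subset r hSC).trans (cthickening_cthickening_subset hr.le hr.le _)
    _ ≤ C.ncard * μ (closedBall 0 (r + r)) := hC.addHaar_cthickening_le μ (by positivity)
    _ ≤ μ (closedBall 0 (2 * r)) * (1 + ENNReal.ofReal (2 / r) * μH[1] S) := by
        rw [mul_comm, two_mul, ← hεr]
        gcongr
        exact hSconn.ncard_le_one_add_hausdorffMeasure maximalSeparatedSet_subset hC hε
          isSeparated_maximalSeparatedSet

theorem volume_neighborhood_le_length_general (d : ℕ) (r : ℝ) (hr : 0 < r) :
    ∃ M : ℝ, 0 < M ∧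
      ∀ S : Set (EuclideanSpace ℝ (Fin d)), S.Nonempty → IsCompact S → IsConnected S →
        volume {x : EuclideanSpace ℝ (Fin d) | Metric.infDist x S ≤ r} ≤
          ENNReal.ofReal M * (1 + μH[1] S) := by
  set V := volume (closedBall (0 : EuclideanSpace ℝ (Fin d)) (2 * r))
  have hV : 0 < V.toReal :=
    ENNReal.toReal_pos (measure_closedBall_pos _ _ (by positivity)).ne' measure_closedBall_lt_top.ne
  refine ⟨V.toReal * (1 + 2 / r), by positivity, fun S hne hS hconn => ?_⟩
  have hnbhd : {x | infDist x S ≤ r} = cthickening r S := by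
    ext x; exact (mem_cthickening_iff_infDist_le hne hr.le).symm
  set c := ENNReal.ofReal (2 / r)
  calc volume {x | infDist x S ≤ r} ≤ V * (1 + c * μH[1] S) :=
        hnbhd ▸ hS.addHaar_cthickening_le volume hconn.isPreconnected hr
    _ ≤ V * ((1 + μH[1] S) + c * (1 + μH[1] S)) := by gcongr <;> simp
    _ = ENNReal.ofReal (V.toReal * (1 + 2 / r)) * (1 + μH[1] S) := by
        rw [ENNReal.ofReal_mul hV.le, ENNReal.ofReal_toReal measure_closedBall_lt_top.ne,
          ENNReal.ofReal_add zero_le_one (by positivity), ENNReal.ofReal_one]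
        ring

/-- For every `d ≥ 1` and `r > 0` there is a constant `M > 0` such that for every
nonempty compact connected `Σ ⊆ ℝ^d`, the volume of the closed `r`-neighborhood of `Σ`
is at most `M·(1 + ℋ¹(Σ))`. -/
theorem volume_neighborhood_le_length (d : ℕ) (hd : 1 ≤ d) (r : ℝ) (hr : 0 < r) :
    ∃ M : ℝ, 0 < M ∧
      ∀ S : Set (EuclideanSpace ℝ (Fin d)), S.Nonempty → IsCompact S → IsConnected S →
        volume {x : EuclideanSpace ℝ (Fin d) | Metric.infDist x S ≤ r} ≤
          ENNReal.ofReal M * (1 + μH[1] S) :=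
  volume_neighborhood_le_length_general d r hr
end

section
/- Let r > 0 and let (K_n) be a sequence of nonempty compact subsets of ℝ^d, each having the uniform interior ball property of radius r, i.e. for every x ∈ K_n there exists y with dist(x, y) ≤ r and closedBall(y, r) ⊆ K_n. If K_n converges to a nonempty compact set K in the Hausdorff distance, then K also has the uniform interior ball property of radius r. -/
open Metric Filter Set
open scoped Topology

/-!
Every point `x` of the limit `L` is a limit of points `pₙ ∈ Kₙ`; let `yₙ` be the centre of an
interior ball of `Kₙ` near `pₙ`. The `yₙ` stay bounded, so in a proper space a subsequence
converges to some `y`, and `dist x y ≤ r` in the limit. Each `z ∈ closedBall y r` is the limit of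
its translates `z + (yₙ - y) ∈ closedBall yₙ r ⊆ Kₙ`, and limits of points of `Kₙ` lie in the
closed set `L`.
-/

def HasUniformInteriorBall {X : Type*} [PseudoMetricSpace X] (E : Set X) (r : ℝ) : Prop :=
  ∀ x ∈ E, ∃ y, dist x y ≤ r ∧ closedBall y r ⊆ E

section HausdorffLimit

variable {X : Type*} [PseudoMetricSpace X] {K : ℕ → Set X} {L : Set X}

theorem exists_seq_mem_tendsto_of_hausdorffDist_tendsto_zero
    (hfin : ∀ n, hausdorffEDist (K n) L ≠ ⊤)
    (hconv : Tendsto (fun n => hausdorffDist (K n) L) atTop (𝓝 0)) {x : X} (hx : x ∈ L) :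
    ∃ p : ℕ → X, (∀ n, p n ∈ K n) ∧ Tendsto p atTop (𝓝 x) := by
  -- the slack `1 / (n + 1)` is needed since `Kₙ` need not attain its distance to `x`
  have hclose : ∀ n, ∃ p ∈ K n, dist p x < hausdorffDist (K n) L + 1 / ((n : ℝ) + 1) := fun n =>
    exists_dist_lt_of_hausdorffDist_lt' hx (by simp only [lt_add_iff_pos_right]; positivity)
      (hfin n)
  choose p hpK hpx using hclose
  refine ⟨p, hpK, tendsto_iff_dist_tendsto_zero.2 ?_⟩
  have hbound : Tendsto (fun n : ℕ => hausdorffDist (K n) L + 1 / ((n : ℝ) + 1)) atTop (𝓝 0) := by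
    simpa using hconv.add tendsto_one_div_add_atTop_nhds_zero_nat
  exact squeeze_zero (fun _ => dist_nonneg) (fun n => (hpx n).le) hbound

theorem mem_of_tendsto_of_hausdorffDist_tendsto_zero
    (hfin : ∀ n, hausdorffEDist (K n) L ≠ ⊤) (hL : IsClosed L)
    (hconv : Tendsto (fun n => hausdorffDist (K n) L) atTop (𝓝 0))
    {z : ℕ → X} {z₀ : X} (hzK : ∀ n, z n ∈ K n) (hz : Tendsto z atTop (𝓝 z₀)) : z₀ ∈ L := by
  have hLne : L.Nonempty := nonempty_of_hausdorffEDist_ne_top ⟨z 0, hzK 0⟩ (hfin 0)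
  have hbound : ∀ n, infDist z₀ L ≤ hausdorffDist (K n) L + dist z₀ (z n) := fun n =>
    calc infDist z₀ L ≤ infDist (z n) L + dist z₀ (z n) := infDist_le_infDist_add_dist
      _ ≤ hausdorffDist (K n) L + dist z₀ (z n) := by
        gcongr; exact infDist_le_hausdorffDist_of_mem (hzK n) (hfin n)
  have hlim : Tendsto (fun n => hausdorffDist (K n) L + dist z₀ (z n)) atTop (𝓝 0) := by
    simpa using hconv.add ((tendsto_const_nhds (x := z₀)).dist hz)
  have hzero : infDist z₀ L = 0 :=
    le_antisymm (ge_of_tendsto' hlim hbound) infDist_nonneg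
  rw [← hL.closure_eq]
  exact (mem_closure_iff_infDist_zero hLne).2 hzero

end HausdorffLimit

section NormedGroup

variable {E : Type*} [SeminormedAddCommGroup E] {K : ℕ → Set E} {L : Set E} {r : ℝ}

theorem closedBall_subset_of_tendsto_of_hausdorffDist_tendsto_zero
    (hfin : ∀ n, hausdorffEDist (K n) L ≠ ⊤) (hL : IsClosed L)
    (hconv : Tendsto (fun n => hausdorffDist (K n) L) atTop (𝓝 0))
    {y : ℕ → E} {y₀ : E} (hball : ∀ n, closedBall (y n) r ⊆ K n) (hy : Tendsto y atTop (𝓝 y₀)) :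
    closedBall y₀ r ⊆ L := by
  intro z hz
  have htranslate : ∀ n, z + (y n - y₀) ∈ K n := fun n => hball n <| by
    rwa [mem_closedBall, dist_eq_norm, show z + (y n - y₀) - y n = z - y₀ by abel, ← dist_eq_norm]
  have hlim : Tendsto (fun n => z + (y n - y₀)) atTop (𝓝 z) := by
    simpa using tendsto_const_nhds.add (hy.sub_const y₀)
  exact mem_of_tendsto_of_hausdorffDist_tendsto_zero hfin hL hconv htranslate hlim

theorem HasUniformInteriorBall.of_hausdorffDist_tendsto_zero [ProperSpace E]
    (hK : ∀ n, HasUniformInteriorBall (K n) r) (hfin : ∀ n, hausdorffEDist (K n) L ≠ ⊤)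
    (hL : IsClosed L) (hconv : Tendsto (fun n => hausdorffDist (K n) L) atTop (𝓝 0)) :
    HasUniformInteriorBall L r := by
  intro x hx
  obtain ⟨p, hpK, hpx⟩ := exists_seq_mem_tendsto_of_hausdorffDist_tendsto_zero hfin hconv hx
  choose y hpy hball using fun n => hK n (p n) (hpK n)
  obtain ⟨C, hC⟩ := (tendsto_iff_dist_tendsto_zero.1 hpx).bddAbove_range
  have hy_mem : ∀ n, y n ∈ closedBall x (r + C) := fun n =>
    calc dist (y n) x ≤ dist (p n) (y n) + dist (p n) x := dist_triangle_left _ _ _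
      _ ≤ r + C := add_le_add (hpy n) (hC (mem_range_self n))
  obtain ⟨y₀, -, φ, hφ, hyφ⟩ := (isCompact_closedBall x (r + C)).tendsto_subseq hy_mem
  refine ⟨y₀, ?_, ?_⟩
  · exact le_of_tendsto' ((hpx.comp hφ.tendsto_atTop).dist hyφ) fun n => hpy (φ n)
  · exact closedBall_subset_of_tendsto_of_hausdorffDist_tendsto_zero (fun n => hfin (φ n)) hL
      (hconv.comp hφ.tendsto_atTop) (fun n => hball (φ n)) hyφ

end NormedGroup

theorem uniform_interior_ball_hausdorff_stable_general (d : ℕ) (r : ℝ)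
    (K : ℕ → Set (EuclideanSpace ℝ (Fin d))) (hKne : ∀ n, (K n).Nonempty)
    (hKc : ∀ n, IsCompact (K n))
    (hUIB : ∀ n, ∀ x ∈ K n, ∃ y : EuclideanSpace ℝ (Fin d),
      dist x y ≤ r ∧ Metric.closedBall y r ⊆ K n)
    (L : Set (EuclideanSpace ℝ (Fin d))) (hLc : IsCompact L)
    (hconv : Filter.Tendsto (fun n => Metric.hausdorffDist (K n) L) Filter.atTop (𝓝 0)) :
    ∀ x ∈ L, ∃ y : EuclideanSpace ℝ (Fin d), dist x y ≤ r ∧ Metric.closedBall y r ⊆ L := by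
  intro x hx
  have hfin : ∀ n, hausdorffEDist (K n) L ≠ ⊤ := fun n =>
    hausdorffEDist_ne_top_of_nonempty_of_bounded (hKne n) ⟨x, hx⟩ (hKc n).isBounded
      hLc.isBounded
  exact HasUniformInteriorBall.of_hausdorffDist_tendsto_zero hUIB hfin hLc.isClosed hconv x hx

/-- The uniform interior ball property of radius `r` is stable under Hausdorff
convergence of nonempty compact sets. -/
theorem uniform_interior_ball_hausdorff_stable (d : ℕ) (r : ℝ) (hr : 0 < r)
    (K : ℕ → Set (EuclideanSpace ℝ (Fin d))) (hKne : ∀ n, (K n).Nonempty)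
    (hKc : ∀ n, IsCompact (K n))
    (hUIB : ∀ n, ∀ x ∈ K n, ∃ y : EuclideanSpace ℝ (Fin d),
      dist x y ≤ r ∧ Metric.closedBall y r ⊆ K n)
    (L : Set (EuclideanSpace ℝ (Fin d))) (hLne : L.Nonempty) (hLc : IsCompact L)
    (hconv : Filter.Tendsto (fun n => Metric.hausdorffDist (K n) L) Filter.atTop (𝓝 0)) :
    ∀ x ∈ L, ∃ y : EuclideanSpace ℝ (Fin d), dist x y ≤ r ∧ Metric.closedBall y r ⊆ L :=
  uniform_interior_ball_hausdorff_stable_general d r K hKne hKc hUIB L hLc hconv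
end
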